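/- For any odd integer n: 1920 divides n(n²-1)(n²-9), 240 divides n(n²-1)(n²-9), 120 divides n(n²-1)(n²+6), and 60 divides n(n²-1)(n²+6). Consequently the coefficient C₄ = n(n²-1)(n²-9)/1920·μ₁⁴ + n(n²-1)(n²-9)/240·μ₂μ₁² + n(n²-1)(n²+6)/120·μ₃μ₁ + n(n²-1)(n²-9)/120·μ₂² + n(n²-1)(n²+6)/60·μ₄ of the n-division polynomial lies in ℤ[μ₁,μ₂,μ₃,μ₄]. -/

import Mathlib

set_option maxRecDepth 4000

noncomputable section

open MvPolynomial

lemma key1' (n : ℤ) (h : Odd n) (m : ℕ) [NeZero m]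
    (H : ∀ k : ZMod m, (2*k+1) * ((2*k+1)^2-1) * ((2*k+1)^2-9) = 0) :
    (m:ℤ) ∣ n * (n^2-1) * (n^2-9) := by
  obtain ⟨k, rfl⟩ := h
  have h2 := H (k : ZMod m)
  have := (ZMod.intCast_zmod_eq_zero_iff_dvd ((2*k+1) * ((2*k+1)^2-1) * ((2*k+1)^2-9)) m).mp
    (by push_cast; linear_combination h2)
  exact_mod_cast this

lemma key2' (n : ℤ) (h : Odd n) (m : ℕ) [NeZero m]
    (H : ∀ k : ZMod m, (2*k+1) * ((2*k+1)^2-1) * ((2*k+1)^2+6) = 0) :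
    (m:ℤ) ∣ n * (n^2-1) * (n^2+6) := by
  obtain ⟨k, rfl⟩ := h
  have h2 := H (k : ZMod m)
  have := (ZMod.intCast_zmod_eq_zero_iff_dvd ((2*k+1) * ((2*k+1)^2-1) * ((2*k+1)^2+6)) m).mp
    (by push_cast; linear_combination h2)
  exact_mod_cast this

lemma div1920' (n : ℤ) (h : Odd n) : (1920:ℤ) ∣ n * (n^2-1) * (n^2-9) := by
  have h128 := key1' n h 128 (by decide)
  have h15 := key1' n h 15 (by decide)
  have hc : IsCoprime (128:ℤ) 15 := by
    rw [Int.isCoprime_iff_gcd_eq_one]; decide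
  have := hc.mul_dvd (by exact_mod_cast h128) (by exact_mod_cast h15)
  exact_mod_cast this

lemma div120' (n : ℤ) (h : Odd n) : (120:ℤ) ∣ n * (n^2-1) * (n^2+6) := by
  have h8 := key2' n h 8 (by decide)
  have h15 := key2' n h 15 (by decide)
  have hc : IsCoprime (8:ℤ) 15 := by
    rw [Int.isCoprime_iff_gcd_eq_one]; decide
  have := hc.mul_dvd (by exact_mod_cast h8) (by exact_mod_cast h15)
  exact_mod_cast this

/-- The coefficient `C₄` of the `n`-plication polynomial of the curve
`y²+(μ₁x+μ₃)y = x³+μ₂x²+μ₄x+μ₆`, as a polynomial in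
`ℚ[μ₁,μ₂,μ₃,μ₄,μ₆]` (with `μ₁,μ₂,μ₃,μ₄ = X 0, X 1, X 2, X 3`):
`C₄ = n(n²-1)(n²-9)/1920·μ₁⁴ + n(n²-1)(n²-9)/240·μ₂μ₁²
    + n(n²-1)(n²+6)/120·μ₃μ₁ + n(n²-1)(n²-9)/120·μ₂² + n(n²-1)(n²+6)/60·μ₄`. -/
def C4poly (n : ℤ) : MvPolynomial (Fin 5) ℚ :=
  C ((n : ℚ) * ((n : ℚ) ^ 2 - 1) * ((n : ℚ) ^ 2 - 9) / 1920) * X 0 ^ 4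
  + C ((n : ℚ) * ((n : ℚ) ^ 2 - 1) * ((n : ℚ) ^ 2 - 9) / 240) * X 1 * X 0 ^ 2
  + C ((n : ℚ) * ((n : ℚ) ^ 2 - 1) * ((n : ℚ) ^ 2 + 6) / 120) * X 2 * X 0
  + C ((n : ℚ) * ((n : ℚ) ^ 2 - 1) * ((n : ℚ) ^ 2 - 9) / 120) * X 1 ^ 2
  + C ((n : ℚ) * ((n : ℚ) ^ 2 - 1) * ((n : ℚ) ^ 2 + 6) / 60) * X 3

/-- For odd `n`: `1920 ∣ n(n²-1)(n²-9)`, `240 ∣ n(n²-1)(n²-9)`,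
`120 ∣ n(n²-1)(n²+6)` and `60 ∣ n(n²-1)(n²+6)`; consequently the coefficient
`C₄` of the `n`-division polynomial lies in `ℤ[μ₁,μ₂,μ₃,μ₄]`. -/
theorem statement19 (n : ℤ) (hodd : Odd n) :
    (1920 : ℤ) ∣ n * (n ^ 2 - 1) * (n ^ 2 - 9) ∧
    (240 : ℤ) ∣ n * (n ^ 2 - 1) * (n ^ 2 - 9) ∧
    (120 : ℤ) ∣ n * (n ^ 2 - 1) * (n ^ 2 + 6) ∧
    (60 : ℤ) ∣ n * (n ^ 2 - 1) * (n ^ 2 + 6) ∧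
    ∃ c : MvPolynomial (Fin 5) ℤ,
      MvPolynomial.map (Int.castRingHom ℚ) c = C4poly n ∧
      (∀ m : Fin 5 →₀ ℕ, MvPolynomial.coeff m c ≠ 0 → m 4 = 0) := by
  have h1 := div1920' n hodd
  have h2 := div120' n hodd
  refine ⟨h1, dvd_trans (by norm_num) h1, h2, dvd_trans (by norm_num) h2, ?_⟩
  obtain ⟨a, ha⟩ := h1
  obtain ⟨b, hb⟩ := h2
  set p : MvPolynomial (Fin 4) ℤ :=
    C a * X 0 ^ 4 + C (8*a) * X 1 * X 0 ^ 2 + C b * X 2 * X 0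
    + C (16*a) * X 1 ^ 2 + C (2*b) * X 3 with hp
  refine ⟨rename Fin.castSucc p, ?_, ?_⟩
  · rw [map_rename, hp]
    have haq : ((n:ℚ) * ((n:ℚ)^2-1) * ((n:ℚ)^2-9)) = 1920 * (a:ℚ) := by
      exact_mod_cast congrArg (Int.cast : ℤ → ℚ) ha
    have hbq : ((n:ℚ) * ((n:ℚ)^2-1) * ((n:ℚ)^2+6)) = 120 * (b:ℚ) := by
      exact_mod_cast congrArg (Int.cast : ℤ → ℚ) hb
    simp only [map_add, map_mul, map_pow, MvPolynomial.map_C, MvPolynomial.map_X,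
      rename_X, rename_C, C4poly, haq, hbq]
    have e0 : Fin.castSucc (0 : Fin 4) = (0 : Fin 5) := rfl
    have e1 : Fin.castSucc (1 : Fin 4) = (1 : Fin 5) := rfl
    have e2 : Fin.castSucc (2 : Fin 4) = (2 : Fin 5) := rfl
    have e3 : Fin.castSucc (3 : Fin 4) = (3 : Fin 5) := rfl
    rw [e0, e1, e2, e3]
    simp only [eq_intCast, ← C_mul]
    ring
  · intro m hm
    obtain ⟨u, hu, -⟩ := coeff_rename_ne_zero _ _ _ hm
    subst hu
    rw [Finsupp.mapDomain_notin_range]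
    rintro ⟨i, hi⟩
    have h4 := i.isLt
    have := congrArg Fin.val hi
    simp at this
    omega
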